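/- arXiv:2508.06331 — 4 statements merged into one kernel-verified Lean document; each statement's English description precedes it below -/
import Mathlib

section
/- Exponential decay of the K-Bessel function of imaginary order beyond the transition range: there exists an absolute constant C such that for all real t ≥ 2 and all u ≥ 2t, cosh(πt/2) |K_{it}(u)| ≤ C e^{-u/5}. -/
open Real Complex

/-- The modified Bessel function of the second kind `K_ν(u)`, defined for `u > 0` and
`ν ∈ ℂ` by `K_ν(u) = ∫₀^∞ e^{-u cosh s} cosh(ν s) ds`. -/
noncomputable def besselK (ν : ℂ) (u : ℝ) : ℂ :=
  ∫ s in Set.Ioi (0 : ℝ), Complex.exp (-(u : ℂ) * Real.cosh s) * Complex.cosh (ν * s)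

/-!
For imaginary order the factor `cosh(its) = cos(ts)` has modulus at most one, so
`|K_{it}(u)| ≤ ∫₀^∞ e^{-u cosh s} ds`. For `u ≥ 4` the bounds `cosh s ≥ 1` and
`cosh s ≥ (1 + s)/2` give `u cosh s ≥ u - 2 + 2s`, hence `|K_{it}(u)| ≤ e^{2-u}/2`. Since
`cosh(πt/2) ≤ e^{πt/2}` and `πt/2 ≤ πu/4 < 4u/5` when `u ≥ 2t`, the product is at most
`(e²/2) e^{-u/5}`.
-/

lemma Real.cosh_le_exp_of_nonneg {x : ℝ} (hx : 0 ≤ x) : Real.cosh x ≤ Real.exp x := by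
  rw [Real.cosh_eq]
  linarith [Real.exp_le_exp.2 (neg_le_self hx)]

lemma Real.one_add_div_two_le_cosh (x : ℝ) : (1 + x) / 2 ≤ Real.cosh x := by
  rw [Real.cosh_eq]
  linarith [Real.add_one_le_exp x, Real.exp_pos (-x)]

lemma Complex.norm_cosh_I_mul_ofReal_le_one (x : ℝ) : ‖Complex.cosh (I * x)‖ ≤ 1 := by
  rw [mul_comm, Complex.cosh_mul_I, ← Complex.ofReal_cos, Complex.norm_real, Real.norm_eq_abs]
  exact Real.abs_cos_le_one x

lemma exp_neg_mul_cosh_le {u : ℝ} (hu : 4 ≤ u) (s : ℝ) :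
    Real.exp (-u * Real.cosh s) ≤ Real.exp (2 - u) * Real.exp (-2 * s) := by
  rw [← Real.exp_add, Real.exp_le_exp]
  nlinarith [Real.one_le_cosh s, Real.one_add_div_two_le_cosh s]

lemma norm_besselK_I_mul_ofReal_le (t : ℝ) {u : ℝ} (hu : 4 ≤ u) :
    ‖besselK (I * t) u‖ ≤ Real.exp (2 - u) / 2 := by
  have hintegrand : ∀ s ∈ Set.Ioi (0 : ℝ),
      ‖Complex.exp (-(u : ℂ) * Real.cosh s) * Complex.cosh (I * t * s)‖ ≤
        Real.exp (2 - u) * Real.exp (-2 * s) := by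
    intro s _
    rw [norm_mul, Complex.norm_exp, mul_assoc, ← Complex.ofReal_mul]
    calc Real.exp (-(u : ℂ) * Real.cosh s).re * ‖Complex.cosh (I * (t * s : ℝ))‖
        ≤ Real.exp (-u * Real.cosh s) * 1 := by
          gcongr
          · norm_cast
          · exact Complex.norm_cosh_I_mul_ofReal_le_one _
      _ ≤ Real.exp (2 - u) * Real.exp (-2 * s) := by
          rw [mul_one]
          exact exp_neg_mul_cosh_le hu s
  calc ‖besselK (I * t) u‖
      ≤ ∫ s in Set.Ioi (0 : ℝ), Real.exp (2 - u) * Real.exp (-2 * s) :=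
        MeasureTheory.norm_integral_le_of_norm_le
          ((integrableOn_exp_mul_Ioi (by norm_num) 0).const_mul _)
          (MeasureTheory.ae_restrict_of_forall_mem measurableSet_Ioi hintegrand)
    _ = Real.exp (2 - u) / 2 := by
        rw [MeasureTheory.integral_const_mul, integral_exp_mul_Ioi (by norm_num)]
        norm_num
        ring

/-- Exponential decay of the K-Bessel function of imaginary order beyond the transition
range: for `t ≥ 2` and `u ≥ 2t`, `cosh(πt/2) |K_{it}(u)| ≤ C e^{-u/5}`. -/
theorem besselK_imaginary_order_exponential_decay :
    ∃ C : ℝ, ∀ t : ℝ, 2 ≤ t → ∀ u : ℝ, 2 * t ≤ u →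
      Real.cosh (π * t / 2) * ‖besselK (Complex.I * t) u‖ ≤
        C * Real.exp (-u / 5) := by
  refine ⟨Real.exp 2 / 2, fun t ht u hu => ?_⟩
  have hπ : π < 3.2 := by linarith [Real.pi_lt_d2]
  have hexponent : π * t / 2 + (2 - u) ≤ 2 + -u / 5 := by nlinarith
  calc Real.cosh (π * t / 2) * ‖besselK (I * t) u‖
      ≤ Real.exp (π * t / 2) * (Real.exp (2 - u) / 2) :=
        mul_le_mul (Real.cosh_le_exp_of_nonneg (by nlinarith [Real.pi_pos]))
          (norm_besselK_I_mul_ofReal_le t (by linarith)) (norm_nonneg _) (Real.exp_nonneg _)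
    _ = Real.exp (π * t / 2 + (2 - u)) / 2 := by rw [Real.exp_add]; ring
    _ ≤ Real.exp (2 + -u / 5) / 2 := by gcongr
    _ = Real.exp 2 / 2 * Real.exp (-u / 5) := by rw [Real.exp_add]; ring
end

section
/- Archimedean bound for the cuspidal triple product factors: let Γ_ℂ(s) = 2(2π)^{-s}Γ(s). There is an absolute constant C such that for all real t_j, t_f, t_g, t_k ≥ 1, setting N₁ = ∏_{ε₁,ε₂,ε₃ ∈ {±1}} |Γ_ℂ((1 + i(ε₁ t_k + ε₂ t_g + ε₃ t_j))/2)|, D₁ = |Γ_ℂ(1+it_k)|² |Γ_ℂ(1+it_g)|² |Γ_ℂ(1+it_j)|², N₂ = |Γ_ℂ((1+it_j)/2)|² |Γ_ℂ((1−it_j)/2)|² ∏_{ε₁,ε₂ ∈ {±1}} |Γ_ℂ((1 + ε₁ it_j)/2 + ε₂ it_f)|, and D₂ = |Γ_ℂ(1+it_f)|⁴ |Γ_ℂ(1+it_j)|², one has (N₁/D₁)^{1/2} (N₂/D₂)^{1/2} ≤ C e^{-(π/2) Q₁(t_j; t_f, t_g, t_k)} / (t_j t_f t_k^{1/2} t_g^{1/2}).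 -/
/-!
Every numerator factor lies on the line `Re s = 1/2`, where the reflection formula gives
`|Γ_ℂ(1/2 + iy)|² = 2 / cosh(πy) ≤ 4 e^{-π|y|}`; every denominator factor is `Γ_ℂ(1 + it)`,
where `Γ(1 + it) = it Γ(it)` and the reflection formula give
`|Γ_ℂ(1 + it)|² = t / (π sinh(πt)) ≥ (2/π) t e^{-πt}`.
Multiplying these explicit bounds, the exponentials collect to exactly `e^{-π Q₁}` and the linear
factors of the denominators to `t_j² t_f² t_k t_g`; no Stirling asymptotics are needed.
-/

open Real Complex Finset

/-- The completed complex Gamma factor `Γ_ℂ(s) = 2 (2π)^{-s} Γ(s)`. -/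
noncomputable def GammaC (s : ℂ) : ℂ := 2 * (2 * (Real.pi : ℂ)) ^ (-s) * Complex.Gamma s

/-- The exponent function `Q₁` governing the exponential decay of the archimedean
factors in the triple product bounds. -/
noncomputable def Q1 (tj tf tg tk : ℝ) : ℝ :=
  |tj / 2 + tf| + |tj / 2 - tf| + |tj + tg + tk| / 2 + |tj + tg - tk| / 2 +
    |tj - tg + tk| / 2 + |tj - tg - tk| / 2 - tj - 2 * tf - tk - tg

/-- The set of signs `{±1}`. -/
def signs : Finset ℤ := {-1, 1}

open ComplexConjugate

theorem norm_GammaC (s : ℂ) : ‖GammaC s‖ = 2 * (2 * π) ^ (-s.re) * ‖Gamma s‖ := by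
  rw [GammaC, norm_mul, norm_mul, show (2 * (π : ℂ)) = ((2 * π : ℝ) : ℂ) by push_cast; ring,
    norm_cpow_eq_rpow_re_of_pos (by positivity)]
  simp

theorem norm_Gamma_sq_of_re_eq_half {s : ℂ} (hs : s.re = 1 / 2) :
    ‖Gamma s‖ ^ 2 = π / Real.cosh (π * s.im) := by
  have hconj : conj s = 1 - s := by norm_num [Complex.ext_iff, hs]
  have hsin : Complex.sin (π * s) = Real.cosh (π * s.im) := by
    rw [← Complex.re_add_im s, hs, mul_add, ← mul_assoc, ← ofReal_mul, Complex.sin_add_mul_I]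
    simp [← div_eq_mul_inv]
  have key : ((‖Gamma s‖ ^ 2 : ℝ) : ℂ) = ((π / Real.cosh (π * s.im) : ℝ) : ℂ) := by
    rw [← Complex.normSq_eq_norm_sq, ← Complex.mul_conj, ← Complex.Gamma_conj, hconj,
      Complex.Gamma_mul_Gamma_one_sub, hsin]
    push_cast; rfl
  exact_mod_cast key

theorem norm_Gamma_one_add_mul_I_sq {t : ℝ} (ht : t ≠ 0) :
    ‖Gamma (1 + t * I)‖ ^ 2 = π * t / Real.sinh (π * t) := by
  have htI : (t : ℂ) * I ≠ 0 := by simp [ht]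
  have hconj : conj (1 + t * I) = 1 - t * I := by simp [Complex.ext_iff]
  have hsin : Complex.sin (π * (t * I)) = Real.sinh (π * t) * I := by
    rw [← mul_assoc, ← ofReal_mul, Complex.sin_mul_I, ofReal_sinh]
  have key : ((‖Gamma (1 + t * I)‖ ^ 2 : ℝ) : ℂ) = ((π * t / Real.sinh (π * t) : ℝ) : ℂ) := by
    rw [← Complex.normSq_eq_norm_sq, ← Complex.mul_conj, ← Complex.Gamma_conj, hconj,
      add_comm, Complex.Gamma_add_one _ htI, mul_assoc, Complex.Gamma_mul_Gamma_one_sub, hsin]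
    push_cast
    field_simp
  exact_mod_cast key

theorem norm_GammaC_sq_of_re_eq_half {s : ℂ} (hs : s.re = 1 / 2) :
    ‖GammaC s‖ ^ 2 = 2 / Real.cosh (π * s.im) := by
  rw [norm_GammaC, mul_pow, mul_pow, norm_Gamma_sq_of_re_eq_half hs, hs,
    Real.rpow_neg (by positivity), ← Real.sqrt_eq_rpow, inv_pow, Real.sq_sqrt (by positivity)]
  field_simp

theorem norm_GammaC_one_add_mul_I_sq {t : ℝ} (ht : t ≠ 0) :
    ‖GammaC (1 + t * I)‖ ^ 2 = t / (π * Real.sinh (π * t)) := by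
  have hre : (1 + t * I).re = 1 := by simp
  have hsinh : Real.sinh (π * t) ≠ 0 := by simp [Real.pi_ne_zero, ht]
  rw [norm_GammaC, mul_pow, mul_pow, norm_Gamma_one_add_mul_I_sq ht, hre, Real.rpow_neg_one]
  field_simp

theorem Real.exp_abs_le_two_mul_cosh (x : ℝ) : Real.exp |x| ≤ 2 * Real.cosh x := by
  rw [← Real.cosh_abs, Real.cosh_eq]
  linarith [Real.exp_pos (-|x|)]

theorem Real.two_mul_sinh_le_exp (x : ℝ) : 2 * Real.sinh x ≤ Real.exp x := by
  rw [Real.sinh_eq]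
  linarith [Real.exp_pos (-x)]

theorem norm_GammaC_le_of_re_eq_half {s : ℂ} (hs : s.re = 1 / 2) :
    ‖GammaC s‖ ≤ 2 * Real.exp (-(π / 2) * |s.im|) := by
  refine le_of_pow_le_pow_left₀ two_ne_zero (by positivity) ?_
  have hcosh : Real.exp (π * |s.im|) ≤ 2 * Real.cosh (π * s.im) := by
    simpa [abs_mul, abs_of_pos Real.pi_pos] using Real.exp_abs_le_two_mul_cosh (π * s.im)
  rw [norm_GammaC_sq_of_re_eq_half hs, div_le_iff₀ (Real.cosh_pos _), mul_pow, ← Real.exp_nat_mul]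
  calc (2 : ℝ) = 2 * Real.exp (-(π * |s.im|)) * Real.exp (π * |s.im|) := by
        rw [mul_assoc, ← Real.exp_add]; simp
    _ ≤ 2 * Real.exp (-(π * |s.im|)) * (2 * Real.cosh (π * s.im)) := by gcongr
    _ = _ := by ring_nf

theorem norm_GammaC_one_add_mul_I_div_two_le (y : ℝ) :
    ‖GammaC ((1 + y * I) / 2)‖ ≤ 2 * Real.exp (-(π / 4) * |y|) := by
  refine (norm_GammaC_le_of_re_eq_half (by simp)).trans_eq ?_
  rw [show ((1 + y * I) / 2).im = y / 2 by simp, abs_div, abs_two]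
  ring_nf

theorem le_norm_GammaC_one_add_mul_I_sq {t : ℝ} (ht : 0 < t) :
    2 / π * t * Real.exp (-(π * t)) ≤ ‖GammaC (1 + t * I)‖ ^ 2 := by
  have hsinh : 0 < Real.sinh (π * t) := Real.sinh_pos_iff.2 (by positivity)
  rw [norm_GammaC_one_add_mul_I_sq ht.ne', le_div_iff₀ (by positivity)]
  calc 2 / π * t * Real.exp (-(π * t)) * (π * Real.sinh (π * t))
      = t * Real.exp (-(π * t)) * (2 * Real.sinh (π * t)) := by field_simp
    _ ≤ t * Real.exp (-(π * t)) * Real.exp (π * t) := by gcongr; exact Real.two_mul_sinh_le_exp _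
    _ = t := by rw [mul_assoc, ← Real.exp_add]; simp

theorem sum_signs {M : Type*} [AddCommMonoid M] (f : ℤ → M) : ∑ e ∈ signs, f e = f (-1) + f 1 := by
  simp [signs]

theorem sum_signs_abs_three (a b c : ℝ) :
    ∑ e1 ∈ signs, ∑ e2 ∈ signs, ∑ e3 ∈ signs, |(e1 * a + e2 * b + e3 * c : ℝ)| =
      2 * (|c + b + a| + |c + b - a| + |c - b + a| + |c - b - a|) := by
  simp only [sum_signs, Int.cast_neg, Int.cast_one]
  rw [← abs_neg (-1 * a + -1 * b + -1 * c), ← abs_neg (-1 * a + 1 * b + -1 * c),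
    ← abs_neg (1 * a + -1 * b + -1 * c), ← abs_neg (1 * a + 1 * b + -1 * c)]
  ring_nf

theorem sum_signs_abs_two (a b : ℝ) :
    ∑ e1 ∈ signs, ∑ e2 ∈ signs, |(e1 * a / 2 + e2 * b : ℝ)| = 2 * (|a / 2 + b| + |a / 2 - b|) := by
  simp only [sum_signs, Int.cast_neg, Int.cast_one]
  rw [← abs_neg (-1 * a / 2 + -1 * b), ← abs_neg (-1 * a / 2 + 1 * b)]
  ring_nf

theorem prod_norm_GammaC_triple_le (a b c : ℝ) :
    ∏ e1 ∈ signs, ∏ e2 ∈ signs, ∏ e3 ∈ signs,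
        ‖GammaC ((1 + I * ((e1 * a + e2 * b + e3 * c : ℝ) : ℂ)) / 2)‖ ≤
      2 ^ 8 * Real.exp (-(π / 2) * (|c + b + a| + |c + b - a| + |c - b + a| + |c - b - a|)) := by
  calc _ ≤ ∏ e1 ∈ signs, ∏ e2 ∈ signs, ∏ e3 ∈ signs,
        2 * Real.exp (-(π / 4) * |(e1 * a + e2 * b + e3 * c : ℝ)|) := by
        gcongr with e1 _ e2 _ e3 _
        simpa only [mul_comm I] using norm_GammaC_one_add_mul_I_div_two_le _
    _ = 2 ^ 8 * Real.exp (-(π / 4) *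
          ∑ e1 ∈ signs, ∑ e2 ∈ signs, ∑ e3 ∈ signs, |(e1 * a + e2 * b + e3 * c : ℝ)|) := by
        simp only [prod_mul_distrib, prod_const, ← Real.exp_sum, mul_sum]
        norm_num [signs]
    _ = _ := by rw [sum_signs_abs_three]; ring_nf

theorem prod_norm_GammaC_pair_le (a b : ℝ) :
    ∏ e1 ∈ signs, ∏ e2 ∈ signs,
        ‖GammaC ((1 + ((e1 : ℝ) : ℂ) * (a : ℂ) * I) / 2 + ((e2 : ℝ) : ℂ) * (b : ℂ) * I)‖ ≤
      2 ^ 4 * Real.exp (-π * (|a / 2 + b| + |a / 2 - b|)) := by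
  calc _ ≤ ∏ e1 ∈ signs, ∏ e2 ∈ signs, 2 * Real.exp (-(π / 2) * |(e1 * a / 2 + e2 * b : ℝ)|) := by
        gcongr with e1 _ e2 _
        exact (norm_GammaC_le_of_re_eq_half (by simp)).trans_eq (by simp)
    _ = 2 ^ 4 * Real.exp (-(π / 2) * ∑ e1 ∈ signs, ∑ e2 ∈ signs, |(e1 * a / 2 + e2 * b : ℝ)|) := by
        simp only [prod_mul_distrib, prod_const, ← Real.exp_sum, mul_sum]
        norm_num [signs]
    _ = _ := by rw [sum_signs_abs_two]; ring_nf

theorem norm_GammaC_sq_mul_prod_le (a b : ℝ) :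
    ‖GammaC ((1 + a * I) / 2)‖ ^ 2 * ‖GammaC ((1 - a * I) / 2)‖ ^ 2 *
        ∏ e1 ∈ signs, ∏ e2 ∈ signs,
          ‖GammaC ((1 + ((e1 : ℝ) : ℂ) * (a : ℂ) * I) / 2 + ((e2 : ℝ) : ℂ) * (b : ℂ) * I)‖ ≤
      2 ^ 8 * Real.exp (-π * (|a| + |a / 2 + b| + |a / 2 - b|)) := by
  have hplus := norm_GammaC_one_add_mul_I_div_two_le a
  have hminus : ‖GammaC ((1 - a * I) / 2)‖ ≤ 2 * Real.exp (-(π / 4) * |a|) := by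
    simpa [sub_eq_add_neg] using norm_GammaC_one_add_mul_I_div_two_le (-a)
  calc _ ≤ (2 * Real.exp (-(π / 4) * |a|)) ^ 2 * (2 * Real.exp (-(π / 4) * |a|)) ^ 2 *
        (2 ^ 4 * Real.exp (-π * (|a / 2 + b| + |a / 2 - b|))) := by
        gcongr
        exact prod_norm_GammaC_pair_le a b
    _ = _ := by
        rw [show -π * (|a| + |a / 2 + b| + |a / 2 - b|) =
            ((4 : ℕ) : ℝ) * (-(π / 4) * |a|) + -π * (|a / 2 + b| + |a / 2 - b|) by push_cast; ring,
          Real.exp_add, Real.exp_nat_mul]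
        ring

theorem sq_le_norm_GammaC_one_add_mul_I_pow_four {t : ℝ} (ht : 0 < t) :
    (2 / π * t * Real.exp (-(π * t))) ^ 2 ≤ ‖GammaC (1 + t * I)‖ ^ 4 := by
  rw [show 4 = 2 * 2 from rfl, pow_mul]
  exact pow_le_pow_left₀ (by positivity) (le_norm_GammaC_one_add_mul_I_sq ht) 2

theorem archimedean_bound_sq_eq {tj tf tg tk : ℝ} (htj : 0 < tj) (htf : 0 < tf) (htg : 0 < tg)
    (htk : 0 < tk) :
    2 ^ 8 * Real.exp (-(π / 2) *
          (|tj + tg + tk| + |tj + tg - tk| + |tj - tg + tk| + |tj - tg - tk|)) /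
        (2 / π * tk * Real.exp (-(π * tk)) * (2 / π * tg * Real.exp (-(π * tg))) *
          (2 / π * tj * Real.exp (-(π * tj)))) *
      (2 ^ 8 * Real.exp (-π * (tj + |tj / 2 + tf| + |tj / 2 - tf|)) /
        ((2 / π * tf * Real.exp (-(π * tf))) ^ 2 * (2 / π * tj * Real.exp (-(π * tj))))) =
    (32 * π ^ 3 * Real.exp (-(π / 2) * Q1 tj tf tg tk) / (tj * tf * √tk * √tg)) ^ 2 := by
  have hexp : Real.exp (-(π / 2) *
        (|tj + tg + tk| + |tj + tg - tk| + |tj - tg + tk| + |tj - tg - tk|)) *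
      Real.exp (-π * (tj + |tj / 2 + tf| + |tj / 2 - tf|)) =
      Real.exp (-(π / 2) * Q1 tj tf tg tk) ^ 2 * (Real.exp (-(π * tk)) * Real.exp (-(π * tg)) *
        Real.exp (-(π * tj)) * (Real.exp (-(π * tf)) ^ 2 * Real.exp (-(π * tj)))) := by
    simp only [sq, ← Real.exp_add]
    congr 1
    unfold Q1
    ring
  rw [div_mul_div_comm, mul_mul_mul_comm, hexp]
  simp only [div_pow, mul_pow, Real.sq_sqrt htk.le, Real.sq_sqrt htg.le]
  field_simp
  ring

/-- Archimedean bound for the cuspidal triple product factors: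
`(N₁/D₁)^{1/2} (N₂/D₂)^{1/2} ≤ C e^{-(π/2) Q₁(t_j; t_f, t_g, t_k)} / (t_j t_f t_k^{1/2} t_g^{1/2})`. -/
theorem archimedean_bound_cuspidal_triple_product :
    ∃ C : ℝ, ∀ tj tf tg tk : ℝ, 1 ≤ tj → 1 ≤ tf → 1 ≤ tg → 1 ≤ tk →
      ((∏ e1 ∈ signs, ∏ e2 ∈ signs, ∏ e3 ∈ signs,
          norm (GammaC ((1 + Complex.I * ((e1 * tk + e2 * tg + e3 * tj : ℝ) : ℂ)) / 2))) /
        (norm (GammaC (1 + (tk : ℂ) * Complex.I)) ^ 2 *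
          norm (GammaC (1 + (tg : ℂ) * Complex.I)) ^ 2 *
          norm (GammaC (1 + (tj : ℂ) * Complex.I)) ^ 2)) ^ ((1 : ℝ) / 2) *
      ((norm (GammaC ((1 + (tj : ℂ) * Complex.I) / 2)) ^ 2 *
          norm (GammaC ((1 - (tj : ℂ) * Complex.I) / 2)) ^ 2 *
          ∏ e1 ∈ signs, ∏ e2 ∈ signs,
            norm (GammaC ((1 + ((e1 : ℝ) : ℂ) * (tj : ℂ) * Complex.I) / 2 +
              ((e2 : ℝ) : ℂ) * (tf : ℂ) * Complex.I))) /
        (norm (GammaC (1 + (tf : ℂ) * Complex.I)) ^ 4 *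
          norm (GammaC (1 + (tj : ℂ) * Complex.I)) ^ 2)) ^ ((1 : ℝ) / 2) ≤
      C * Real.exp (-(π / 2) * Q1 tj tf tg tk) /
        (tj * tf * tk ^ ((1 : ℝ) / 2) * tg ^ ((1 : ℝ) / 2)) := by
  refine ⟨32 * π ^ 3, fun tj tf tg tk htj htf htg htk => ?_⟩
  have htj0 : 0 < tj := by linarith
  have htf0 : 0 < tf := by linarith
  have htg0 : 0 < tg := by linarith
  have htk0 : 0 < tk := by linarith
  simp only [← Real.sqrt_eq_rpow]
  rw [← Real.sqrt_mul (by positivity), ← Real.sqrt_sq (by positivity : (0 : ℝ) ≤ 32 * π ^ 3 *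
    Real.exp (-(π / 2) * Q1 tj tf tg tk) / (tj * tf * √tk * √tg)),
    ← archimedean_bound_sq_eq htj0 htf0 htg0 htk0]
  gcongr √(?_ / ?_ * (?_ / ?_))
  · exact prod_norm_GammaC_triple_le tk tg tj
  · gcongr <;> exact le_norm_GammaC_one_add_mul_I_sq ‹_›
  · simpa only [abs_of_pos htj0] using norm_GammaC_sq_mul_prod_le tj tf
  · gcongr
    · exact sq_le_norm_GammaC_one_add_mul_I_pow_four htf0
    · exact le_norm_GammaC_one_add_mul_I_sq htj0
end

section
/- Divisor sum over a thin annulus in an imaginary quadratic ring of integers: for every ε > 0 and every L > 0 there is a constant C (depending only on K, L, ε) such that for all t ≥ 2, ∑_{0 ≠ ω ∈ O_K, |L|ω| − t| ≤ t^{1/3}} σ₀(ω) ≤ C t^{4/3 + ε}. -/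
/-!
Since the unit group is finite, `ω` has at most `#O_K^×` times as many divisors as the ideal `(ω)`,
so the divisor bound `d(I) ≪_δ N(I)^δ` for ideals gives `σ₀(ω) ≪ N(ω)^δ`. In an imaginary quadratic
field `N(ω) = |ω|²`, so the annulus `|L|ω| − t| ≤ s` lies in the norm range
`[((t − s)/L)², ((t + s)/L)²]`, which contains `≪ ts + 1` integers `n`. An element of norm `n`
divides `n`, so at most `≪ N((n))^δ = n^{2δ}` elements have norm `n`. With `s = t^{1/3}`,
`N(ω) ≪ t²` and `δ = ε/6` the sum is `≪ t^{4/3} · t^ε`.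
-/

open Real Complex NumberField

/-- The divisor function on the ring of integers of a number field `K`:
`σ₀(ω) = (1/#O_K^×) · #{d ∈ O_K : d ∣ ω}`. -/
noncomputable def sigma0 (K : Type*) [Field K] [NumberField K] (ω : 𝓞 K) : ℝ :=
  (Nat.card {d : 𝓞 K // d ∣ ω} : ℝ) / (Nat.card ((𝓞 K)ˣ) : ℝ)

theorem add_one_le_pow_of_two_le {x : ℝ} (hx : 2 ≤ x) (e : ℕ) : (e + 1 : ℝ) ≤ x ^ e := by
  have hbern : 1 + e * (x - 1) ≤ x ^ e := by
    simpa using one_add_mul_le_pow (a := x - 1) (by linarith) e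
  nlinarith [(Nat.cast_nonneg e : (0 : ℝ) ≤ e)]

theorem add_one_le_div_mul_pow {r x : ℝ} (hr : 1 < r) (hx : r ≤ x) (e : ℕ) :
    (e + 1 : ℝ) ≤ r / (r - 1) * x ^ e := by
  have hbern : 1 + e * (r - 1) ≤ r ^ e := by
    simpa using one_add_mul_le_pow (a := r - 1) (by linarith) e
  have hre : r ^ e ≤ x ^ e := pow_le_pow_left₀ (by linarith) hx e
  rw [div_mul_eq_mul_div, le_div_iff₀ (by linarith)]
  nlinarith [one_le_pow₀ (n := e) hr.le]

theorem Set.Finite.tsum_le_ncard_mul {α : Type*} {s : Set α} (hs : s.Finite) {f : α → ℝ} {c : ℝ}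
    (h : ∀ x ∈ s, f x ≤ c) : ∑' x : s, f x ≤ s.ncard * c := by
  have := hs.fintype
  rw [tsum_fintype, ← Nat.card_coe_set_eq, Nat.card_eq_fintype_card, ← nsmul_eq_mul]
  exact Finset.sum_le_card_nsmul _ _ _ fun x _ => h x x.2

theorem card_Icc_ceil_floor_le {A B : ℝ} (hA : 0 ≤ A) (hAB : A ≤ B) :
    ((Finset.Icc ⌈A⌉₊ ⌊B⌋₊).card : ℝ) ≤ B - A + 1 := by
  rw [Nat.card_Icc]
  by_cases h : ⌈A⌉₊ ≤ ⌊B⌋₊ + 1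
  · rw [Nat.cast_sub h]
    push_cast
    linarith [Nat.floor_le (hA.trans hAB), Nat.le_ceil A]
  · rw [Nat.sub_eq_zero_of_le (by omega)]
    push_cast
    linarith

theorem exists_units_injective_prod_span (R : Type*) [CommRing R] [IsDomain R] :
    ∃ f : R → Rˣ, Function.Injective fun d => (f d, Ideal.span {d}) := by
  -- `g` picks a generator of each principal ideal; `f d` is the unit with `d = g (span {d}) * f d`.
  let g := Function.invFun fun d : R => Ideal.span {d}
  have hg (d : R) : Associated (g (Ideal.span {d})) d :=
    Ideal.span_singleton_eq_span_singleton.mp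
      (Function.invFun_eq (f := fun d : R => Ideal.span {d}) ⟨d, rfl⟩)
  refine ⟨fun d => (hg d).choose, fun d₁ d₂ h => ?_⟩
  simp only [Prod.mk.injEq] at h
  rw [← (hg d₁).choose_spec, ← (hg d₂).choose_spec]
  exact congrArg₂ (fun J (u : Rˣ) => g J * u) h.2 h.1

theorem Ideal.span_singleton_dvd_span_singleton_of_dvd {R : Type*} [CommRing R] {a b : R}
    (h : a ∣ b) : Ideal.span {a} ∣ Ideal.span {b} := by
  obtain ⟨c, rfl⟩ := h
  exact ⟨Ideal.span {c}, (Ideal.span_singleton_mul_span_singleton a c).symm⟩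

theorem finite_and_card_dvd_le_card_units_mul {R : Type*} [CommRing R] [IsDomain R] [Finite Rˣ]
    (x : R) [Finite {J : Ideal R // J ∣ Ideal.span {x}}] :
    Finite {d : R // d ∣ x} ∧ Nat.card {d : R // d ∣ x} ≤
      Nat.card Rˣ * Nat.card {J : Ideal R // J ∣ Ideal.span {x}} := by
  obtain ⟨f, hf⟩ := exists_units_injective_prod_span R
  let F : {d : R // d ∣ x} → Rˣ × {J : Ideal R // J ∣ Ideal.span {x}} := fun d =>
    (f d, ⟨Ideal.span {d.1}, Ideal.span_singleton_dvd_span_singleton_of_dvd d.2⟩)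
  have hF : Function.Injective F := fun d₁ d₂ h => Subtype.ext <| hf <| by
    simp only [F, Prod.mk.injEq, Subtype.mk.injEq] at h ⊢
    exact h
  exact ⟨Finite.of_injective F hF, Nat.card_prod Rˣ _ ▸ Nat.card_le_card_of_injective F hF⟩

namespace Ideal

open UniqueFactorizationMonoid

variable {S : Type*} [CommRing S] [IsDedekindDomain S]

open scoped Classical in
theorem finite_and_card_dvd_le_prod {I : Ideal S} (hI : I ≠ ⊥) :
    Finite {J : Ideal S // J ∣ I} ∧ Nat.card {J : Ideal S // J ∣ I} ≤
      ∏ p ∈ (normalizedFactors I).toFinset, ((normalizedFactors I).count p + 1) := by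
  have ne_bot (J : {J : Ideal S // J ∣ I}) : J.1 ≠ ⊥ := ne_zero_of_dvd_ne_zero hI J.2
  let f : {J : Ideal S // J ∣ I} → Finset.Iic (normalizedFactors I) := fun J =>
    ⟨normalizedFactors J.1, Finset.mem_Iic.mpr <|
      (dvd_iff_normalizedFactors_le_normalizedFactors (ne_bot J) hI).mp J.2⟩
  have hf : Function.Injective f := fun J₁ J₂ h => by
    ext1
    rw [← prod_normalizedFactors_eq_self (ne_bot J₁), ← prod_normalizedFactors_eq_self (ne_bot J₂)]
    exact congrArg (fun m => (Subtype.val m).prod) h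
  refine ⟨Finite.of_injective f hf, ?_⟩
  rw [← Multiset.card_Iic, ← Nat.card_eq_finsetCard]
  exact Nat.card_le_card_of_injective f hf

variable [Module.Free ℤ S]

theorem absNorm_eq_prod_normalizedFactors [DecidableEq (Ideal S)] {I : Ideal S} (hI : I ≠ ⊥) :
    absNorm I =
      ∏ p ∈ (normalizedFactors I).toFinset, absNorm p ^ (normalizedFactors I).count p := by
  rw [← Finset.prod_multiset_map_count, ← map_multiset_prod, prod_normalizedFactors_eq_self hI]

theorem two_le_absNorm_of_prime [Module.Finite ℤ S] {p : Ideal S} (hp : Prime p) :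
    2 ≤ absNorm p := by
  have h0 : absNorm p ≠ 0 := fun h => hp.ne_zero (absNorm_eq_zero_iff.mp h)
  have h1 : absNorm p ≠ 1 := fun h => hp.not_isUnit (isUnit_iff.mpr (absNorm_eq_one_iff.mp h))
  omega

theorem card_dvd_le_mul_absNorm_rpow [Module.Finite ℤ S] [Finite Sˣ] {C δ : ℝ}
    (hdiv : ∀ I : Ideal S, I ≠ ⊥ → (Nat.card {J : Ideal S // J ∣ I} : ℝ) ≤ C * (absNorm I : ℝ) ^ δ)
    {x : S} (hx : x ≠ 0) :
    (Nat.card {d : S // d ∣ x} : ℝ) ≤ Nat.card Sˣ * (C * (absNorm (span {x}) : ℝ) ^ δ) := by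
  have hspan : span {x} ≠ ⊥ := span_singleton_eq_bot.not.mpr hx
  have := (finite_and_card_dvd_le_prod hspan).1
  calc (Nat.card {d : S // d ∣ x} : ℝ)
      ≤ Nat.card Sˣ * Nat.card {J : Ideal S // J ∣ span {x}} := by
        exact_mod_cast (finite_and_card_dvd_le_card_units_mul x).2
    _ ≤ _ := by gcongr; exact hdiv _ hspan

/-- `e + 1 ≤ (N(p)^δ)^e` as soon as `N(p)^δ ≥ 2`; the finitely many primes with `N(p)^δ < 2`
each cost at most the factor `2^δ / (2^δ - 1)`. -/
theorem exists_card_dvd_le_mul_absNorm_rpow [Module.Finite ℤ S] [CharZero S] {δ : ℝ} (hδ : 0 < δ) :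
    ∃ C : ℝ, 0 < C ∧ ∀ I : Ideal S, I ≠ ⊥ →
      (Nat.card {J : Ideal S // J ∣ I} : ℝ) ≤ C * (absNorm I : ℝ) ^ δ := by
  classical
  set r : ℝ := 2 ^ δ
  have hr : 1 < r := Real.one_lt_rpow (by norm_num) hδ
  set c : ℝ := r / (r - 1)
  have hc : 1 ≤ c := by rw [le_div_iff₀ (by linarith)]; linarith
  set small := (finite_setOfPred_absNorm_le (S := S) ⌊(2 : ℝ) ^ δ⁻¹⌋₊).toFinset
  refine ⟨c ^ small.card, by positivity, fun I hI => ?_⟩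
  set T := normalizedFactors I
  have factor_bound (p) (hp : p ∈ T.toFinset) : ((T.count p : ℝ) + 1) ≤
      (if p ∈ small then c else 1) * ((absNorm p : ℝ) ^ δ) ^ T.count p := by
    have h2 : (2 : ℝ) ≤ absNorm p := by
      exact_mod_cast two_le_absNorm_of_prime
        (prime_of_normalized_factor p (Multiset.mem_toFinset.mp hp))
    split_ifs with hsmall
    · exact add_one_le_div_mul_pow hr (rpow_le_rpow (by norm_num) h2 hδ.le) _
    · have hlarge : (2 : ℝ) ^ δ⁻¹ < absNorm p := by
        simp only [small, Set.Finite.mem_toFinset, Set.mem_ofPred_eq, not_le] at hsmall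
        exact Nat.lt_of_floor_lt hsmall
      rw [one_mul]
      refine add_one_le_pow_of_two_le ?_ _
      calc (2 : ℝ) = (2 ^ δ⁻¹) ^ δ := by
            rw [← rpow_mul (by norm_num), inv_mul_cancel₀ hδ.ne', rpow_one]
        _ ≤ _ := rpow_le_rpow (by positivity) hlarge.le hδ.le
  calc (Nat.card {J // J ∣ I} : ℝ) ≤ ∏ p ∈ T.toFinset, ((T.count p : ℝ) + 1) := by
        exact_mod_cast (finite_and_card_dvd_le_prod hI).2
    _ ≤ ∏ p ∈ T.toFinset, (if p ∈ small then c else 1) * ((absNorm p : ℝ) ^ δ) ^ T.count p :=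
        Finset.prod_le_prod (fun _ _ => by positivity) factor_bound
    _ = (∏ p ∈ T.toFinset, if p ∈ small then c else 1) * (absNorm I : ℝ) ^ δ := by
        rw [Finset.prod_mul_distrib, absNorm_eq_prod_normalizedFactors hI]
        push_cast
        rw [← Real.finsetProd_rpow _ _ (fun _ _ => by positivity)]
        simp_rw [rpow_pow_comm (Nat.cast_nonneg _)]
        rfl
    _ ≤ c ^ small.card * (absNorm I : ℝ) ^ δ := by
        gcongr
        rw [Finset.prod_ite_mem, Finset.prod_const]
        exact pow_le_pow_right₀ hc (Finset.card_le_card Finset.inter_subset_right)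

theorem finite_and_ncard_le_of_absNorm_mem_Icc [CharZero S] [Finite Sˣ] {s : Set S} {lo hi : ℕ}
    (hlo : 0 < lo) {D : ℝ}
    (hs : ∀ ω ∈ s, absNorm (span {ω}) ∈ Finset.Icc lo hi)
    (hD : ∀ n ∈ Finset.Icc lo hi, (Nat.card {d : S // d ∣ (n : S)} : ℝ) ≤ D) :
    s.Finite ∧ (s.ncard : ℝ) ≤ (Finset.Icc lo hi).card * D := by
  classical
  have dvd_absNorm (ω : S) : ω ∣ (absNorm (span {ω}) : S) := mem_span_singleton.mp (absNorm_mem _)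
  have finite_dvd (n) (hn : n ∈ Finset.Icc lo hi) : {d : S | d ∣ (n : S)}.Finite := by
    have hn0 : (n : S) ≠ 0 := Nat.cast_ne_zero.mpr (by grind)
    have := (finite_and_card_dvd_le_prod (span_singleton_eq_bot.not.mpr hn0)).1
    exact (finite_and_card_dvd_le_card_units_mul (n : S)).1
  have hfin : s.Finite := (Set.Finite.biUnion (Finset.finite_toSet _) finite_dvd).subset
    fun ω hω => Set.mem_biUnion (hs ω hω) (dvd_absNorm ω)
  refine ⟨hfin, ?_⟩
  rw [← hfin.coe_toFinset, Set.ncard_coe_finset, Finset.card_eq_sum_card_fiberwise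
    (f := fun ω => absNorm (span {ω})) fun ω hω => hs ω (hfin.mem_toFinset.mp hω)]
  push_cast
  refine (Finset.sum_le_card_nsmul _ _ D fun n hn => ?_).trans_eq (nsmul_eq_mul _ _)
  refine le_trans ?_ (hD n hn)
  have fiber_sub : ↑{ω ∈ hfin.toFinset | absNorm (span {ω}) = n} ⊆ {d : S | d ∣ (n : S)} :=
    fun ω hω => by
      simp only [Finset.coe_filter, Set.Finite.mem_toFinset] at hω
      exact hω.2 ▸ dvd_absNorm ω
  rw [← Set.ncard_coe_finset]
  exact_mod_cast (Set.ncard_le_ncard fiber_sub (finite_dvd n hn)).trans_eq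
    (Nat.card_coe_set_eq _).symm

end Ideal

section NumberField

variable {K : Type*} [Field K] [NumberField K]

theorem Algebra.norm_eq_normSq_of_finrank_eq_two (h2 : Module.finrank ℚ K = 2) (φ : K →+* ℂ)
    (him : ∃ x : K, (φ x).im ≠ 0) (x : K) :
    ((Algebra.norm ℚ x : ℚ) : ℝ) = Complex.normSq (φ x) := by
  classical
  let σ : K →ₐ[ℚ] ℂ := φ.toRatAlgHom
  let τ : K →ₐ[ℚ] ℂ := ((starRingEnd ℂ).comp φ).toRatAlgHom
  have hστ : σ ≠ τ := fun h => by
    obtain ⟨x₀, hx₀⟩ := him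
    have := congrArg Complex.im (DFunLike.congr_fun h x₀)
    simp only [σ, τ, RingHom.toRatAlgHom_apply, RingHom.coe_comp, Function.comp_apply,
      Complex.conj_im] at this
    exact hx₀ (by linarith)
  have huniv : (Finset.univ : Finset (K →ₐ[ℚ] ℂ)) = {σ, τ} :=
    (Finset.eq_of_subset_of_card_le (Finset.subset_univ _)
      (by rw [Finset.card_univ, AlgHom.card, h2, Finset.card_pair hστ])).symm
  have hnorm : algebraMap ℚ ℂ (Algebra.norm ℚ x) = (Complex.normSq (φ x) : ℂ) := by
    rw [Algebra.norm_eq_prod_embeddings ℚ ℂ x, huniv, Finset.prod_pair hστ]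
    exact Complex.mul_conj (φ x)
  exact_mod_cast (eq_ratCast (algebraMap ℚ ℂ) _).symm.trans hnorm

theorem absNorm_span_singleton_eq_norm_sq (h2 : Module.finrank ℚ K = 2) (φ : K →+* ℂ)
    (him : ∃ x : K, (φ x).im ≠ 0) (ω : 𝓞 K) :
    (Ideal.absNorm (Ideal.span {ω}) : ℝ) = ‖φ ω‖ ^ 2 := by
  have h := Algebra.norm_eq_normSq_of_finrank_eq_two h2 φ him ω
  rw [← Algebra.coe_norm_int, Rat.cast_intCast] at h
  rw [Ideal.absNorm_span_singleton, Nat.cast_natAbs, Int.cast_abs, h, ← Complex.sq_norm,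
    abs_of_nonneg (sq_nonneg _)]

variable [Finite (𝓞 K)ˣ] {C δ : ℝ}

theorem sigma0_le_mul_absNorm_rpow
    (hdiv : ∀ I : Ideal (𝓞 K), I ≠ ⊥ →
      (Nat.card {J : Ideal (𝓞 K) // J ∣ I} : ℝ) ≤ C * (Ideal.absNorm I : ℝ) ^ δ)
    {ω : 𝓞 K} (hω : ω ≠ 0) : sigma0 K ω ≤ C * (Ideal.absNorm (Ideal.span {ω}) : ℝ) ^ δ := by
  rw [sigma0, div_le_iff₀' (by exact_mod_cast Nat.card_pos)]
  exact Ideal.card_dvd_le_mul_absNorm_rpow hdiv hω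

theorem tsum_sigma0_le_of_absNorm_mem_Icc (hC : 0 ≤ C) (hδ : 0 ≤ δ)
    (hdiv : ∀ I : Ideal (𝓞 K), I ≠ ⊥ →
      (Nat.card {J : Ideal (𝓞 K) // J ∣ I} : ℝ) ≤ C * (Ideal.absNorm I : ℝ) ^ δ)
    {s : Set (𝓞 K)} {A B : ℝ} (hA : 0 < A) (hAB : A ≤ B)
    (hs : ∀ ω ∈ s, (Ideal.absNorm (Ideal.span {ω}) : ℝ) ∈ Set.Icc A B) :
    ∑' ω : s, sigma0 K ω ≤
      Nat.card (𝓞 K)ˣ * C ^ 2 * (B - A + 1) * B ^ ((Module.finrank ℚ K + 1) * δ) := by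
  set d := Module.finrank ℚ K
  have hB : 0 < B := hA.trans_le hAB
  have ne_zero (ω) (hω : ω ∈ s) : ω ≠ 0 := by
    rintro rfl
    have := (hs 0 hω).1
    simp only [Set.singleton_zero, Ideal.span_zero, Ideal.absNorm_bot, Nat.cast_zero] at this
    linarith
  have hD (n) (hn : n ∈ Finset.Icc ⌈A⌉₊ ⌊B⌋₊) : (Nat.card {x : 𝓞 K // x ∣ (n : 𝓞 K)} : ℝ) ≤
      Nat.card (𝓞 K)ˣ * (C * (B ^ d) ^ δ) := by
    have hnB : (n : ℝ) ≤ B := (Nat.le_floor_iff hB.le).mp (Finset.mem_Icc.mp hn).2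
    refine (Ideal.card_dvd_le_mul_absNorm_rpow hdiv
      (Nat.cast_ne_zero.mpr (Nat.one_le_iff_ne_zero.mp ((Nat.ceil_pos.mpr hA).trans_le
        (Finset.mem_Icc.mp hn).1)))).trans ?_
    rw [Ideal.absNorm_span_natCast, RingOfIntegers.rank]
    gcongr
    push_cast
    gcongr
  obtain ⟨hfin, hcard⟩ := Ideal.finite_and_ncard_le_of_absNorm_mem_Icc (s := s)
    (Nat.ceil_pos.mpr hA) (fun ω hω => Finset.mem_Icc.mpr
      ⟨Nat.ceil_le.mpr (hs ω hω).1, Nat.le_floor (hs ω hω).2⟩) hD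
  have hσ (ω) (hω : ω ∈ s) : sigma0 K ω ≤ C * B ^ δ :=
    (sigma0_le_mul_absNorm_rpow hdiv (ne_zero ω hω)).trans (by gcongr; exact (hs ω hω).2)
  calc ∑' ω : s, sigma0 K ω ≤ s.ncard * (C * B ^ δ) := hfin.tsum_le_ncard_mul hσ
    _ ≤ (Finset.Icc ⌈A⌉₊ ⌊B⌋₊).card * (Nat.card (𝓞 K)ˣ * (C * (B ^ d) ^ δ)) * (C * B ^ δ) := by
        gcongr
    _ ≤ (B - A + 1) * (Nat.card (𝓞 K)ˣ * (C * (B ^ d) ^ δ)) * (C * B ^ δ) := by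
        gcongr
        exact card_Icc_ceil_floor_le hA.le hAB
    _ = _ := by
        rw [show ((d : ℝ) + 1) * δ = d * δ + δ by ring, rpow_add hB, rpow_mul hB.le, rpow_natCast]
        ring

theorem sq_mem_Icc_of_abs_mul_sub_le {L t s x : ℝ} (hL : 0 < L) (hst : s ≤ t) (hx : 0 ≤ x)
    (h : |L * x - t| ≤ s) : x ^ 2 ∈ Set.Icc (((t - s) / L) ^ 2) (((t + s) / L) ^ 2) := by
  obtain ⟨h₁, h₂⟩ := abs_le.mp h
  constructor
  · exact pow_le_pow_left₀ (div_nonneg (by linarith) hL.le) (by rw [div_le_iff₀ hL]; linarith) 2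
  · exact pow_le_pow_left₀ hx (by rw [le_div_iff₀ hL]; linarith) 2

theorem tsum_sigma0_annulus_le (h2 : Module.finrank ℚ K = 2) (φ : K →+* ℂ)
    (him : ∃ x : K, (φ x).im ≠ 0) (hC : 0 ≤ C) (hδ : 0 ≤ δ)
    (hdiv : ∀ I : Ideal (𝓞 K), I ≠ ⊥ →
      (Nat.card {J : Ideal (𝓞 K) // J ∣ I} : ℝ) ≤ C * (Ideal.absNorm I : ℝ) ^ δ)
    {L t s : ℝ} (hL : 0 < L) (hs : 0 ≤ s) (hst : s < t) :
    ∑' ω : {ω : 𝓞 K // ω ≠ 0 ∧ |L * ‖φ (ω : K)‖ - t| ≤ s}, sigma0 K ω ≤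
      Nat.card (𝓞 K)ˣ * C ^ 2 * (4 * t * s / L ^ 2 + 1) * (4 * t ^ 2 / L ^ 2) ^ (3 * δ) := by
  have hA : 0 < ((t - s) / L) ^ 2 := pow_pos (div_pos (by linarith) hL) 2
  have ht : 0 < t := hs.trans_lt hst
  have hAB : ((t - s) / L) ^ 2 ≤ ((t + s) / L) ^ 2 :=
    pow_le_pow_left₀ (div_nonneg (by linarith) hL.le) (by gcongr; linarith) 2
  have hB : ((t + s) / L) ^ 2 ≤ 4 * t ^ 2 / L ^ 2 := by
    rw [div_pow]
    gcongr
    nlinarith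
  have hannulus (ω : 𝓞 K) (hω : ω ∈ {ω : 𝓞 K | ω ≠ 0 ∧ |L * ‖φ (ω : K)‖ - t| ≤ s}) :
      (Ideal.absNorm (Ideal.span {ω}) : ℝ) ∈ Set.Icc (((t - s) / L) ^ 2) (((t + s) / L) ^ 2) := by
    rw [absNorm_span_singleton_eq_norm_sq h2 φ him]
    exact sq_mem_Icc_of_abs_mul_sub_le hL hst.le (norm_nonneg _) hω.2
  calc _ ≤ _ := tsum_sigma0_le_of_absNorm_mem_Icc hC hδ hdiv hA hAB hannulus
    _ = Nat.card (𝓞 K)ˣ * C ^ 2 * (4 * t * s / L ^ 2 + 1) * (((t + s) / L) ^ 2) ^ (3 * δ) := by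
        rw [h2, show ((2 : ℕ) : ℝ) + 1 = 3 by norm_num]
        congr 2
        ring
    _ ≤ _ := by gcongr

end NumberField

theorem annulus_factor_le {L t ε : ℝ} (hL : 0 < L) (ht : 1 ≤ t) :
    (4 * t * t ^ ((1 : ℝ) / 3) / L ^ 2 + 1) * (4 * t ^ 2 / L ^ 2) ^ (ε / 2) ≤
      (4 / L ^ 2 + 1) * (4 / L ^ 2) ^ (ε / 2) * t ^ ((4 : ℝ) / 3 + ε) := by
  have ht0 : 0 < t := by linarith
  have hts : t * t ^ ((1 : ℝ) / 3) = t ^ ((4 : ℝ) / 3) := by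
    rw [show (4 : ℝ) / 3 = 1 + 1 / 3 by norm_num, rpow_add ht0, rpow_one]
  have hgrowth : (4 * t ^ 2 / L ^ 2) ^ (ε / 2) = (4 / L ^ 2) ^ (ε / 2) * t ^ ε := by
    rw [mul_div_right_comm, mul_rpow (by positivity) (by positivity), ← rpow_natCast t 2,
      ← rpow_mul ht0.le]
    ring_nf
  have hfactor : 4 * t * t ^ ((1 : ℝ) / 3) / L ^ 2 + 1 ≤ (4 / L ^ 2 + 1) * t ^ ((4 : ℝ) / 3) := by
    have : 1 ≤ t ^ ((4 : ℝ) / 3) := one_le_rpow ht (by norm_num)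
    rw [mul_assoc, hts, add_mul, one_mul, mul_div_right_comm]
    linarith
  calc _ ≤ (4 / L ^ 2 + 1) * t ^ ((4 : ℝ) / 3) * ((4 / L ^ 2) ^ (ε / 2) * t ^ ε) := by
        rw [hgrowth]
        gcongr
    _ = _ := by rw [rpow_add ht0]; ring

/-- Divisor sum over a thin annulus in an imaginary quadratic ring of integers:
`∑_{0 ≠ ω ∈ O_K, |L|ω| − t| ≤ t^{1/3}} σ₀(ω) ≤ C t^{4/3 + ε}` for all `t ≥ 2`. -/
theorem divisor_sum_thin_annulus (K : Type*) [Field K] [NumberField K]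
    (h2 : Module.finrank ℚ K = 2) (φ : K →+* ℂ) (him : ∃ x : K, (φ x).im ≠ 0)
    (ε : ℝ) (hε : 0 < ε) (L : ℝ) (hL : 0 < L) :
    ∃ C : ℝ, 0 < C ∧ ∀ t : ℝ, 2 ≤ t →
      ∑' ω : {ω : 𝓞 K // ω ≠ 0 ∧ |L * ‖φ (ω : K)‖ - t| ≤ t ^ ((1 : ℝ) / 3)},
          sigma0 K (ω : 𝓞 K) ≤
        C * t ^ ((4 : ℝ) / 3 + ε) := by
  rcases finite_or_infinite (𝓞 K)ˣ with hunits | hunits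
  swap
  -- `Nat.card` of an infinite type is `0`, so then `sigma0` vanishes identically.
  · refine ⟨1, one_pos, fun t _ => ?_⟩
    simp only [sigma0, Nat.card_eq_zero_of_infinite, Nat.cast_zero, div_zero, tsum_zero, one_mul]
    positivity
  obtain ⟨C₀, hC₀, hdiv⟩ :=
    Ideal.exists_card_dvd_le_mul_absNorm_rpow (S := 𝓞 K) (δ := ε / 6) (by positivity)
  have hunits_pos : (0 : ℝ) < Nat.card (𝓞 K)ˣ := by exact_mod_cast Nat.card_pos
  refine ⟨Nat.card (𝓞 K)ˣ * C₀ ^ 2 * (4 / L ^ 2 + 1) * (4 / L ^ 2) ^ (ε / 2), by positivity,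
    fun t ht => ?_⟩
  have hst : t ^ ((1 : ℝ) / 3) < t := by
    simpa using rpow_lt_rpow_of_exponent_lt (show 1 < t by linarith) (by norm_num : (1 : ℝ) / 3 < 1)
  calc _ ≤ _ := tsum_sigma0_annulus_le h2 φ him hC₀.le (by positivity) hdiv hL (by positivity) hst
    _ = Nat.card (𝓞 K)ˣ * C₀ ^ 2 * ((4 * t * t ^ ((1 : ℝ) / 3) / L ^ 2 + 1) *
          (4 * t ^ 2 / L ^ 2) ^ (ε / 2)) := by ring_nf
    _ ≤ Nat.card (𝓞 K)ˣ * C₀ ^ 2 *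
          ((4 / L ^ 2 + 1) * (4 / L ^ 2) ^ (ε / 2) * t ^ ((4 : ℝ) / 3 + ε)) :=
        mul_le_mul_of_nonneg_left (annulus_factor_le hL (by linarith)) (by positivity)
    _ = _ := by ring
end

section
/- Absolute convergence of the Eisenstein series on hyperbolic 3-space in the region of convergence: let K be an imaginary quadratic number field with ring of integers O_K ⊂ ℂ. For every z ∈ ℂ, every r > 0 and every real σ > 2, the series ∑_{(c,d) ∈ O_K² ∖ {(0,0)}} ( r / (|cz + d|² + |c|² r²) )^{σ} converges. -/
/-!
For an imaginary quadratic field the only infinite place is `|φ ·|`, so `|φ a|² = |N(a)| ≥ 1` for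
every nonzero integer `a`. Hence `(c, d) ↦ (φ c, φ d)` embeds `O_K²` as a discrete subgroup of rank
`4` in `ℂ²`, on which `∑ ‖v‖^(-2σ)` converges for `2σ > 4`. Since `|cz + d|² + |c|² r²` is bounded
below by a positive multiple of `max(|c|, |d|)²`, each term of the Eisenstein series is at most a
constant times `‖(φ c, φ d)‖^(-2σ)`.
-/

open Real Complex NumberField Module

section Lattice

variable {M E : Type*} [AddCommGroup M] [NormedAddCommGroup E]

theorem discreteTopology_of_forall_le_norm {L : Submodule ℤ E} {δ : ℝ} (hδ : 0 < δ)
    (h : ∀ x ∈ L, x ≠ 0 → δ ≤ ‖x‖) : DiscreteTopology L := by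
  have hball : ({0} : Set L) = Metric.ball 0 δ := by
    ext x
    refine ⟨fun hx => by simpa [Set.mem_singleton_iff.mp hx] using hδ, fun hx => ?_⟩
    by_contra hx0
    exact (h x x.2 (by simpa using hx0)).not_gt (mem_ball_zero_iff.mp hx)
  rw [discreteTopology_iff_isOpen_singleton_zero, hball]
  exact Metric.isOpen_ball

theorem summable_norm_rpow_of_forall_le_norm [NormedSpace ℝ E] [FiniteDimensional ℝ E]
    [Module.Finite ℤ M] [Module.Free ℤ M] {f : M →ₗ[ℤ] E} (hf : Function.Injective f)
    {δ : ℝ} (hδ : 0 < δ) (hsep : ∀ x, x ≠ 0 → δ ≤ ‖f x‖) {r : ℝ} (hr : r < -finrank ℤ M) :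
    Summable fun x => ‖f x‖ ^ r := by
  have : DiscreteTopology (LinearMap.range f) := discreteTopology_of_forall_le_norm hδ <| by
    rintro _ ⟨x, rfl⟩ hx
    exact hsep x (by rintro rfl; simp at hx)
  have hsum := ZLattice.summable_norm_rpow (LinearMap.range f) r
    (by rwa [LinearMap.finrank_range_of_inj hf])
  exact hsum.comp_injective (i := f.rangeRestrict) (f.injective_rangeRestrict_iff.mpr hf)

end Lattice

namespace NumberField

variable {K : Type*} [Field K]

theorem ComplexEmbedding.not_isReal_of_im_ne_zero {φ : K →+* ℂ} {x : K} (hx : (φ x).im ≠ 0) :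
    ¬ ComplexEmbedding.IsReal φ :=
  fun h => hx (Complex.conj_eq_iff_im.mp (by simpa using RingHom.congr_fun h x))

variable [NumberField K]

open scoped Classical in
theorem InfinitePlace.subsingleton_of_finrank_eq_two (h2 : finrank ℚ K = 2) {φ : K →+* ℂ}
    (hφ : ¬ ComplexEmbedding.IsReal φ) : Subsingleton (InfinitePlace K) := by
  have hcomplex : 0 < nrComplexPlaces K :=
    Fintype.card_pos_iff.mpr ⟨⟨InfinitePlace.mk φ, InfinitePlace.isComplex_mk_iff.mpr hφ⟩⟩
  have hrank := InfinitePlace.card_add_two_mul_card_eq_rank K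
  rw [← Fintype.card_le_one_iff_subsingleton,
    InfinitePlace.card_eq_nrRealPlaces_add_nrComplexPlaces]
  omega

theorem one_le_norm_embedding [Subsingleton (InfinitePlace K)] (φ : K →+* ℂ) {a : 𝓞 K}
    (ha : a ≠ 0) : 1 ≤ ‖φ a‖ :=
  InfinitePlace.one_le_of_lt_one (w := InfinitePlace.mk φ) ha
    fun _ hw => (hw (Subsingleton.elim _ _)).elim

end NumberField

theorem sq_norm_prod_le_mul (z : ℂ) {r : ℝ} (hr : 0 < r) (c d : ℂ) :
    ‖(c, d)‖ ^ 2 ≤ (2 + (2 * ‖z‖ ^ 2 + 1) / r ^ 2) * (‖c * z + d‖ ^ 2 + ‖c‖ ^ 2 * r ^ 2) := by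
  have hd : ‖d‖ ≤ ‖c * z + d‖ + ‖c‖ * ‖z‖ := by
    simpa [norm_mul] using norm_sub_le (c * z + d) (c * z)
  have hd_sq : ‖d‖ ^ 2 ≤ 2 * ‖c * z + d‖ ^ 2 + 2 * ‖z‖ ^ 2 * ‖c‖ ^ 2 := by
    nlinarith [pow_le_pow_left₀ (norm_nonneg d) hd 2, sq_nonneg (‖c * z + d‖ - ‖c‖ * ‖z‖)]
  have hmax : ‖(c, d)‖ ^ 2 ≤ ‖c‖ ^ 2 + ‖d‖ ^ 2 := by
    rcases max_cases ‖c‖ ‖d‖ with ⟨h, -⟩ | ⟨h, -⟩ <;>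
      rw [Prod.norm_def, h] <;> nlinarith [sq_nonneg ‖c‖, sq_nonneg ‖d‖]
  have hc : (2 * ‖z‖ ^ 2 + 1) * ‖c‖ ^ 2 = (2 * ‖z‖ ^ 2 + 1) / r ^ 2 * (‖c‖ ^ 2 * r ^ 2) := by
    field_simp
  have hK : 0 ≤ (2 * ‖z‖ ^ 2 + 1) / r ^ 2 := by positivity
  nlinarith [sq_nonneg ‖c * z + d‖, mul_nonneg hK (sq_nonneg ‖c * z + d‖),
    mul_nonneg (sq_nonneg ‖c‖) (sq_nonneg r)]

theorem rpow_div_le_mul_rpow_of_sq_le {r Q a M σ : ℝ} (hr : 0 < r) (ha : 0 < a) (hM : 0 ≤ M)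
    (hσ : 0 ≤ σ) (h : a ^ 2 ≤ M * Q) : (r / Q) ^ σ ≤ (M * r) ^ σ * a ^ (-(2 * σ)) := by
  have hQ : 0 < Q := pos_of_mul_pos_right ((pow_pos ha 2).trans_le h) hM
  calc (r / Q) ^ σ ≤ (M * r / a ^ 2) ^ σ := by
        refine rpow_le_rpow (by positivity) ?_ hσ
        rw [div_le_div_iff₀ hQ (pow_pos ha 2)]
        nlinarith
    _ = (M * r) ^ σ * a ^ (-(2 * σ)) := by
        rw [div_rpow (by positivity) (by positivity), ← rpow_natCast a 2, ← rpow_mul ha.le,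
          rpow_neg ha.le, div_eq_mul_inv]
        norm_num

/-- Absolute convergence of the Eisenstein series on hyperbolic 3-space in the region of
convergence: for an imaginary quadratic number field `K` with ring of integers `O_K ⊂ ℂ`
(via the embedding `φ`), for every `z ∈ ℂ`, `r > 0` and real `σ > 2`, the series
`∑_{(c,d) ∈ O_K² ∖ {(0,0)}} (r / (|cz + d|² + |c|² r²))^σ` converges. -/
theorem eisenstein_series_summable (K : Type*) [Field K] [NumberField K]
    (h2 : Module.finrank ℚ K = 2) (φ : K →+* ℂ) (him : ∃ x : K, (φ x).im ≠ 0)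
    (z : ℂ) (r : ℝ) (hr : 0 < r) (σ : ℝ) (hσ : 2 < σ) :
    Summable (fun p : {p : 𝓞 K × 𝓞 K // p ≠ (0, 0)} =>
      (r / (‖φ ((p : 𝓞 K × 𝓞 K).1 : K) * z + φ ((p : 𝓞 K × 𝓞 K).2 : K)‖ ^ 2 +
        ‖φ ((p : 𝓞 K × 𝓞 K).1 : K)‖ ^ 2 * r ^ 2)) ^ σ) := by
  obtain ⟨_, hx⟩ := him
  have := InfinitePlace.subsingleton_of_finrank_eq_two h2
    (ComplexEmbedding.not_isReal_of_im_ne_zero hx)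
  let g : 𝓞 K →ₗ[ℤ] ℂ := (φ.comp (algebraMap (𝓞 K) K)).toAddMonoidHom.toIntLinearMap
  have hg : Function.Injective g := φ.injective.comp RingOfIntegers.coe_injective
  have hsep : ∀ p : 𝓞 K × 𝓞 K, p ≠ 0 → 1 ≤ ‖g.prodMap g p‖ := by
    rintro ⟨c, d⟩ hp
    by_cases hc : c = 0
    · exact le_max_of_le_right (one_le_norm_embedding φ (a := d) fun hd => hp (by simp [hc, hd]))
    · exact le_max_of_le_left (one_le_norm_embedding φ hc)
  have hrank : finrank ℤ (𝓞 K × 𝓞 K) = 4 := by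
    rw [finrank_prod, RingOfIntegers.rank, h2]
  have hsum := summable_norm_rpow_of_forall_le_norm (hg.prodMap hg) one_pos hsep
    (r := -(2 * σ)) (by rw [hrank]; push_cast; linarith)
  set M := 2 + (2 * ‖z‖ ^ 2 + 1) / r ^ 2
  refine ((hsum.comp_injective Subtype.val_injective).mul_left ((M * r) ^ σ)).of_nonneg_of_le
    (fun _ => by positivity) fun p => ?_
  exact rpow_div_le_mul_rpow_of_sq_le hr (one_pos.trans_le (hsep _ p.2)) (by positivity)
    (by linarith) (sq_norm_prod_le_mul z hr _ _)
end
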